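/- For every natural number n, the group given by the balanced presentation ⟨a, b ∣ a·b·a = b·a·b, aⁿ = bⁿ⁺¹⟩ is the trivial group; that is, every element of the presented group with generators a, b and relators a·b·a·(b·a·b)⁻¹ and aⁿ·(bⁿ⁺¹)⁻¹ equals the identity. -/

import Mathlib

/-!
Conjugation by `t = a * b` sends `a` to `b` (this is the braid relation) and hence `b` to
`a * b * a⁻¹`. Conjugating `aⁿ = bⁿ⁺¹` by `t` therefore gives `bⁿ = a * bⁿ⁺¹ * a⁻¹ = aⁿ = bⁿ⁺¹`,
so `b = 1`, and then the braid relation forces `a = 1`.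
-/

section BraidRelation

variable {G : Type*} [Group G] {a b : G}

theorem conj_mul_self_of_braid (hbraid : a * b * a = b * a * b) :
    (a * b) * a * (a * b)⁻¹ = b := by
  rw [mul_inv_rev, ← mul_assoc, hbraid, mul_inv_cancel_right, mul_inv_cancel_right]

theorem eq_one_of_braid_of_pow_eq_pow_succ {n : ℕ} (hbraid : a * b * a = b * a * b)
    (hpow : a ^ n = b ^ (n + 1)) : a = 1 ∧ b = 1 := by
  have hb : b = 1 := by
    have hconj : b ^ n = b ^ (n + 1) :=
      calc b ^ n = ((a * b) * a * (a * b)⁻¹) ^ n := by rw [conj_mul_self_of_braid hbraid]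
        _ = (a * b) * b ^ (n + 1) * (a * b)⁻¹ := by rw [conj_pow, hpow]
        _ = a * (b ^ (n + 1)) * a⁻¹ := by group
        _ = b ^ (n + 1) := by rw [← hpow]; group
    simpa [pow_succ] using hconj
  refine ⟨?_, hb⟩
  simpa [hb] using hbraid

end BraidRelation

namespace PresentedGroup

theorem eq_one_of_forall_of_eq_one {α : Type*} {rels : Set (FreeGroup α)}
    (h : ∀ i : α, (of i : PresentedGroup rels) = 1) (x : PresentedGroup rels) : x = 1 :=
  Subgroup.mem_bot.mp <| generated_by rels ⊥ (fun i => Subgroup.mem_bot.mpr (h i)) x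

theorem eq_one_of_braid_mem_of_pow_mem {rels : Set (FreeGroup Bool)} {n : ℕ}
    (hbraid : FreeGroup.of true * FreeGroup.of false * FreeGroup.of true *
      (FreeGroup.of false * FreeGroup.of true * FreeGroup.of false)⁻¹ ∈ rels)
    (hpow : FreeGroup.of true ^ n * (FreeGroup.of false ^ (n + 1))⁻¹ ∈ rels)
    (x : PresentedGroup rels) : x = 1 := by
  have hbraid' := mk_eq_mk_of_mul_inv_mem hbraid
  have hpow' := mk_eq_mk_of_mul_inv_mem hpow
  simp only [map_mul, map_pow] at hbraid' hpow'
  obtain ⟨ha, hb⟩ := eq_one_of_braid_of_pow_eq_pow_succ hbraid' hpow'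
  refine eq_one_of_forall_of_eq_one (fun i => ?_) x
  cases i
  exacts [hb, ha]

end PresentedGroup

/-- The Andrews–Curtis type presentation ⟨a, b ∣ a·b·a = b·a·b, aⁿ = bⁿ⁺¹⟩
(relators a·b·a·(b·a·b)⁻¹ and aⁿ·(bⁿ⁺¹)⁻¹, with generators a = of true,
b = of false) presents the trivial group, for every natural number n. -/
theorem presentedGroup_braid_pow_trivial (n : ℕ)
    (x : PresentedGroup
      ({FreeGroup.of true * FreeGroup.of false * FreeGroup.of true *
          (FreeGroup.of false * FreeGroup.of true * FreeGroup.of false)⁻¹,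
        FreeGroup.of true ^ n * (FreeGroup.of false ^ (n + 1))⁻¹} :
        Set (FreeGroup Bool))) :
    x = 1 :=
  PresentedGroup.eq_one_of_braid_mem_of_pow_mem (Set.mem_insert _ _)
    (Set.mem_insert_of_mem _ (Set.mem_singleton _)) x
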